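/- arXiv:1606.05445 — 8 statements merged into one kernel-verified Lean document; each statement's English description precedes it below -/
import Mathlib

section
/- The map (x,r) ↦ (x - r, -r) is an order isomorphism from the poset of formal balls B(ℝ≥0∞, d_ℝ) onto the set C = {(a,b) ∈ (ℝ ∪ {∞}) × (-∞,0] : a - b ≥ 0} ordered componentwise. -/
open scoped ENNReal NNReal Classical

/-- A formal ball: a point together with a non-negative real radius. -/
structure FormalBall (X : Type*) where
  center : X
  radius : ℝ≥0

/-- A quasi-metric on `X`: a `[0,∞]`-valued distance with `d x x = 0`, the triangle
inequality, and `d x y = d y x = 0 → x = y`. -/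
structure QuasiMetric (X : Type*) where
  d : X → X → ℝ≥0∞
  refl : ∀ x, d x x = 0
  triangle : ∀ x y z, d x z ≤ d x y + d y z
  separated : ∀ x y, d x y = 0 → d y x = 0 → x = y

/-- The order on formal balls: `(x,r) ≤ (y,s)` iff `d x y ≤ r - s`
(equivalently `s ≤ r` and `d x y ≤ r - s`). -/
def ballLE {X : Type*} (q : QuasiMetric X) (b c : FormalBall X) : Prop :=
  c.radius ≤ b.radius ∧ q.d b.center c.center ≤ ↑(b.radius - c.radius)

/-- The partial order of formal balls `B(X,d)`. -/
def ballOrder {X : Type*} (q : QuasiMetric X) : PartialOrder (FormalBall X) where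
  le := ballLE q
  le_refl b := ⟨le_rfl, by simp [ballLE, q.refl]⟩
  le_trans a b c hab hbc := ⟨hbc.1.trans hab.1, by
    calc q.d a.center c.center ≤ q.d a.center b.center + q.d b.center c.center :=
          q.triangle _ _ _
      _ ≤ ↑(a.radius - b.radius) + ↑(b.radius - c.radius) := add_le_add hab.2 hbc.2
      _ = ↑(a.radius - c.radius) := by
          rw [← ENNReal.coe_add, tsub_add_tsub_cancel hab.1 hbc.1]⟩
  le_antisymm a b hab hba := by
    have hr : b.radius = a.radius := le_antisymm hab.1 hba.1
    have h1 : q.d a.center b.center = 0 := le_antisymm (by simpa [hr] using hab.2) bot_le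
    have h2 : q.d b.center a.center = 0 := le_antisymm (by simpa [hr] using hba.2) bot_le
    have hc := q.separated _ _ h1 h2
    cases a; cases b; simp_all

/-- The quasi-metric `d_ℝ(x,y) = max (x - y) 0` (truncated subtraction) on `[0,∞]`. -/
noncomputable def drealQM : QuasiMetric ℝ≥0∞ where
  d x y := x - y
  refl x := tsub_self x
  triangle _ _ _ := tsub_le_tsub_add_tsub
  separated x y h1 h2 := le_antisymm (tsub_eq_zero_iff_le.mp h1) (tsub_eq_zero_iff_le.mp h2)

/-- The target set `C = {(a,b) ∈ (ℝ ∪ {∞}) × (-∞,0] : a - b ≥ 0}` (equivalently `b ≤ a`),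
realized inside `EReal × ℝ`. -/
def Cset : Set (EReal × ℝ) := {p | p.1 ≠ ⊥ ∧ p.2 ≤ 0 ∧ (p.2 : EReal) ≤ p.1}

/-!
Read in `EReal`, where subtracting a real number is cancellable, the condition
`x - y ≤ r - s` (truncated subtraction on `[0,∞]`) becomes `x ≤ y + (r - s)`, i.e.
`x - r ≤ y - s`. So in the coordinates `(x - r, -r)` the ball order is the componentwise order,
and `(a, t) ↦ (a - t, -t)` inverts the map on `C`.
-/

theorem ENNReal.tsub_le_coe_tsub_iff_sub_le_sub {x y : ℝ≥0∞} {r s : ℝ≥0} (hsr : s ≤ r) :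
    x - y ≤ ↑(r - s) ↔ (x : EReal) - (r : ℝ) ≤ (y : EReal) - (s : ℝ) := by
  have hshift : (((r - s : ℝ≥0) : ℝ≥0∞) : EReal) + y = (y : EReal) - (s : ℝ) + (r : ℝ) := by
    rw [EReal.coe_nnreal_eq_coe_real, NNReal.coe_sub hsr, EReal.coe_sub, sub_eq_add_neg,
      sub_eq_add_neg]
    ac_rfl
  rw [tsub_le_iff_right, ← EReal.coe_ennreal_le_coe_ennreal_iff, EReal.coe_ennreal_add, hshift,
    EReal.sub_le_iff_le_add (.inl (EReal.coe_ne_bot _)) (.inl (EReal.coe_ne_top _))]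

theorem EReal.sub_coe_sub_coe_neg (x : EReal) (t : ℝ) : x - t - ↑(-t) = x := by
  rw [sub_eq_add_neg (x - t), ← EReal.coe_neg, neg_neg, EReal.sub_add_cancel]

namespace FormalBall

noncomputable def toCoord (b : FormalBall ℝ≥0∞) : EReal × ℝ :=
  ((b.center : EReal) - (b.radius : ℝ), -(b.radius : ℝ))

/-- Inverse of `toCoord` on `Cset`; `EReal.toENNReal` and `Real.toNNReal` truncate outside it. -/
noncomputable def ofCoord (p : EReal × ℝ) : FormalBall ℝ≥0∞ :=
  ⟨(p.1 - p.2).toENNReal, (-p.2).toNNReal⟩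

theorem toCoord_mem_Cset (b : FormalBall ℝ≥0∞) : b.toCoord ∈ Cset := by
  have hle : ((-(b.radius : ℝ) : ℝ) : EReal) ≤ (b.center : EReal) - (b.radius : ℝ) := by
    rw [← zero_sub, EReal.coe_sub]
    exact EReal.sub_le_sub (EReal.coe_ennreal_nonneg _) le_rfl
  exact ⟨ne_bot_of_le_ne_bot (EReal.coe_ne_bot _) hle, by simp [toCoord], hle⟩

theorem ofCoord_toCoord (b : FormalBall ℝ≥0∞) : ofCoord b.toCoord = b := by
  obtain ⟨x, r⟩ := b
  simp only [ofCoord, toCoord, EReal.sub_coe_sub_coe_neg, EReal.toENNReal_coe, neg_neg,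
    Real.toNNReal_coe]

theorem toCoord_ofCoord {p : EReal × ℝ} (hp : p ∈ Cset) : (ofCoord p).toCoord = p := by
  obtain ⟨a, t⟩ := p
  obtain ⟨ha, ht, hta⟩ := hp
  have hat : 0 ≤ a - t :=
    (EReal.sub_nonneg (.inr (EReal.coe_ne_top t)) (.inl ha)).2 hta
  have hnt : 0 ≤ -t := neg_nonneg.2 ht
  simp only [toCoord, ofCoord, EReal.coe_toENNReal hat, Real.coe_toNNReal _ hnt,
    EReal.sub_coe_sub_coe_neg, neg_neg]

theorem ballLE_drealQM_iff (b c : FormalBall ℝ≥0∞) :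
    ballLE drealQM b c ↔ b.toCoord ≤ c.toCoord := by
  simp only [ballLE, drealQM, toCoord, Prod.mk_le_mk, neg_le_neg_iff, NNReal.coe_le_coe]
  exact ⟨fun ⟨hsr, hd⟩ => ⟨(ENNReal.tsub_le_coe_tsub_iff_sub_le_sub hsr).1 hd, hsr⟩,
    fun ⟨hd, hsr⟩ => ⟨hsr, (ENNReal.tsub_le_coe_tsub_iff_sub_le_sub hsr).2 hd⟩⟩

end FormalBall

/-- `(x,r) ↦ (x - r, -r)` is an order isomorphism from
`B([0,∞], d_ℝ)` onto `C`, ordered componentwise. -/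
theorem ball_dreal_orderIso_C :
    letI := ballOrder drealQM
    let f : FormalBall ℝ≥0∞ → EReal × ℝ :=
      fun b => ((b.center : EReal) - (b.radius : ℝ), -(b.radius : ℝ))
    (∀ b, f b ∈ Cset) ∧ Set.BijOn f Set.univ Cset ∧
      ∀ b c : FormalBall ℝ≥0∞, b ≤ c ↔ f b ≤ f c := by
  have hinv : Set.InvOn FormalBall.ofCoord FormalBall.toCoord Set.univ Cset :=
    ⟨fun b _ => FormalBall.ofCoord_toCoord b, fun _ hp => FormalBall.toCoord_ofCoord hp⟩
  exact ⟨FormalBall.toCoord_mem_Cset,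
    hinv.bijOn (fun b _ => FormalBall.toCoord_mem_Cset b) (fun _ _ => Set.mem_univ _),
    FormalBall.ballLE_drealQM_iff⟩
end

section
/- In a standard quasi-metric space X,d, if a directed family of formal balls (x_i, r_i) has supremum (x, r) in B(X,d), then r = inf_i r_i. -/
open scoped ENNReal NNReal Classical

/-- Standardness: a directed family of formal balls has a supremum iff the family with all
radii uniformly shifted by `s` has one. -/
def Standard {X : Type*} (q : QuasiMetric X) : Prop :=
  letI := ballOrder q
  ∀ S : Set (FormalBall X), S.Nonempty → DirectedOn (· ≤ ·) S → ∀ s : ℝ≥0,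
    ((∃ b, IsLUB S b) ↔
      ∃ b, IsLUB ((fun c : FormalBall X => FormalBall.mk c.center (c.radius + s)) '' S) b)

/-!
The radius of a supremum is at most every radius of the family, hence at most their infimum `ρ`.
Conversely, every radius is at least `ρ`, so the family is the upward shift by `ρ` of a directed
family `T`. Standardness turns the supremum of the family into a supremum `u` of `T`, and `u`
shifted up by `ρ` is an upper bound of the family, so the radius of the supremum is at least
`u.radius + ρ ≥ ρ`.
-/

namespace FormalBall

variable {X : Type*}

def shift (s : ℝ≥0) (c : FormalBall X) : FormalBall X := ⟨c.center, c.radius + s⟩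

theorem shift_le_shift_iff (q : QuasiMetric X) {s : ℝ≥0} {b c : FormalBall X} :
    (letI := ballOrder q; shift s b ≤ shift s c) ↔ (letI := ballOrder q; b ≤ c) := by
  change ballLE q _ _ ↔ ballLE q _ _
  simp only [ballLE, shift, add_le_add_iff_right, add_tsub_add_eq_tsub_right]

theorem image_shift_preimage {S : Set (FormalBall X)} {ρ : ℝ≥0} (hS : ∀ c ∈ S, ρ ≤ c.radius) :
    shift ρ '' (shift ρ ⁻¹' S) = S :=
  Set.image_preimage_eq_of_subset fun c hc =>
    ⟨⟨c.center, c.radius - ρ⟩, by simp [shift, tsub_add_cancel_of_le (hS c hc)]⟩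

theorem le_radius_of_isLUB {q : QuasiMetric X} (hstd : Standard q) {S : Set (FormalBall X)}
    (hne : S.Nonempty) (hdir : letI := ballOrder q; DirectedOn (· ≤ ·) S) {b : FormalBall X}
    (hlub : letI := ballOrder q; IsLUB S b) {ρ : ℝ≥0} (hS : ∀ c ∈ S, ρ ≤ c.radius) :
    ρ ≤ b.radius := by
  let := ballOrder q
  set T := shift ρ ⁻¹' S
  have hT : shift ρ '' T = S := image_shift_preimage hS
  have hTne : T.Nonempty := Set.image_nonempty.1 (hT ▸ hne)
  have hTdir : DirectedOn (· ≤ ·) T :=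
    (directedOn_image.1 (hT ▸ hdir)).mono fun _ _ h => (shift_le_shift_iff q).1 h
  obtain ⟨u, hu⟩ :=
    (hstd T hTne hTdir ρ).2 (show ∃ b, IsLUB (shift ρ '' T) b from ⟨b, hT ▸ hlub⟩)
  have hmono : Monotone (shift (X := X) ρ) := fun _ _ h => (shift_le_shift_iff q).2 h
  have hbu : b ≤ shift ρ u := hlub.2 (hT ▸ hmono.mem_upperBounds_image hu.1)
  exact le_add_self.trans hbu.1

end FormalBall

/-- in a standard quasi-metric space, if a directed family of formal balls
has supremum `(x,r)`, then `r` is the infimum of the radii. -/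
theorem radius_of_lub_eq_sInf {X : Type*} (q : QuasiMetric X) (hstd : Standard q)
    (S : Set (FormalBall X)) (hne : S.Nonempty)
    (hdir : letI := ballOrder q; DirectedOn (· ≤ ·) S)
    (b : FormalBall X) (hlub : letI := ballOrder q; IsLUB S b) :
    b.radius = sInf (FormalBall.radius '' S) :=
  le_antisymm (le_csInf (hne.image _) (Set.forall_mem_image.2 fun _ hc => (hlub.1 hc).1))
    (FormalBall.le_radius_of_isLUB hstd hne hdir hlub fun _ hc =>
      csInf_le (OrderBot.bddBelow _) (Set.mem_image_of_mem _ hc))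
end

section
/- In a standard quasi-metric space X,d, the image of X under x ↦ (x,0) is a Gδ subset of B(X,d) with its Scott topology: it equals the intersection of the Scott-open sets U_n = {(x,r) : r < 1/2^n}. -/
open scoped ENNReal NNReal Classical

/-- Scott-open: upward closed and inaccessible by suprema of nonempty directed sets. -/
def ScottOpen {α : Type*} [Preorder α] (U : Set α) : Prop :=
  (∀ a ∈ U, ∀ b, a ≤ b → b ∈ U) ∧
  ∀ S : Set α, S.Nonempty → DirectedOn (· ≤ ·) S → ∀ a, IsLUB S a → a ∈ U → (S ∩ U).Nonempty

namespace FormalBall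

variable {X : Type*}

def addRadius (s : ℝ≥0) (c : FormalBall X) : FormalBall X := ⟨c.center, c.radius + s⟩

def subRadius (s : ℝ≥0) (c : FormalBall X) : FormalBall X := ⟨c.center, c.radius - s⟩

theorem addRadius_subRadius {s : ℝ≥0} {c : FormalBall X} (hs : s ≤ c.radius) :
    addRadius s (subRadius s c) = c := by
  simp [addRadius, subRadius, tsub_add_cancel_of_le hs]

theorem range_mk_zero : Set.range (fun x : X => FormalBall.mk x 0) = {b | b.radius = 0} := by
  ext ⟨x, r⟩
  simp [eq_comm]

theorem iInter_radius_lt_half_pow :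
    ⋂ n : ℕ, {b : FormalBall X | b.radius < (1 / 2) ^ n} = {b | b.radius = 0} := by
  ext b
  simp only [Set.mem_iInter, Set.mem_ofPred_eq]
  refine ⟨fun h => ?_, fun h n => h ▸ pow_pos (by norm_num) n⟩
  by_contra h0
  obtain ⟨n, hn⟩ := exists_pow_lt_of_lt_one (pos_iff_ne_zero.mpr h0) (by norm_num : (1 / 2 : ℝ≥0) < 1)
  exact (h n).not_gt hn

end FormalBall

namespace QuasiMetric

open FormalBall

variable {X : Type*} (q : QuasiMetric X)

theorem radius_le_of_ballLE {b c : FormalBall X} (h : ballLE q b c) : c.radius ≤ b.radius := h.1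

theorem ballLE_addRadius {b c : FormalBall X} (h : ballLE q b c) (s : ℝ≥0) :
    ballLE q (addRadius s b) (addRadius s c) :=
  ⟨add_le_add_left h.1 s, by simpa [addRadius, add_tsub_add_eq_tsub_right] using h.2⟩

theorem ballLE_subRadius {b c : FormalBall X} (h : ballLE q b c) {s : ℝ≥0} (hs : s ≤ c.radius) :
    ballLE q (subRadius s b) (subRadius s c) :=
  ⟨tsub_le_tsub_right h.1 s, by simpa [subRadius, tsub_tsub_tsub_cancel_right hs] using h.2⟩

variable {q}

theorem directedOn_image_subRadius {S : Set (FormalBall X)} (hdir : DirectedOn (ballLE q) S)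
    {s : ℝ≥0} (hs : ∀ c ∈ S, s ≤ c.radius) : DirectedOn (ballLE q) (subRadius s '' S) := by
  rintro _ ⟨c₁, hc₁, rfl⟩ _ ⟨c₂, hc₂, rfl⟩
  obtain ⟨c, hc, h₁, h₂⟩ := hdir c₁ hc₁ c₂ hc₂
  exact ⟨subRadius s c, ⟨c, hc, rfl⟩, q.ballLE_subRadius h₁ (hs c hc),
    q.ballLE_subRadius h₂ (hs c hc)⟩

/-- Standardness lets us shift the whole set down by a common lower bound `s` of the radii,
take the supremum there and shift it back up, giving an upper bound of radius at least `s`. -/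
theorem le_radius_of_isLUB (hstd : Standard q) {S : Set (FormalBall X)} (hne : S.Nonempty)
    (hdir : DirectedOn (ballLE q) S) {a : FormalBall X}
    (ha : letI := ballOrder q; IsLUB S a) {s : ℝ≥0} (hs : ∀ c ∈ S, s ≤ c.radius) :
    s ≤ a.radius := by
  let := ballOrder q
  have hshift : addRadius s '' (subRadius s '' S) = S := by
    rw [Set.image_image]
    exact (Set.image_congr fun c hc => addRadius_subRadius (hs c hc)).trans (Set.image_id S)
  obtain ⟨b, hb⟩ : ∃ b, IsLUB (subRadius s '' S) b := by
    refine (hstd _ (hne.image _) (directedOn_image_subRadius hdir hs) s).2 ?_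
    change ∃ b, IsLUB (addRadius s '' (subRadius s '' S)) b
    rw [hshift]
    exact ⟨a, ha⟩
  have hab : a ≤ addRadius s b := ha.2 fun c hc =>
    addRadius_subRadius (hs c hc) ▸ q.ballLE_addRadius (hb.1 ⟨c, hc, rfl⟩) s
  exact le_add_self.trans (q.radius_le_of_ballLE hab)

theorem scottOpen_radius_lt (hstd : Standard q) (ε : ℝ≥0) :
    letI := ballOrder q; ScottOpen {b : FormalBall X | b.radius < ε} := by
  refine ⟨fun a ha b hab => (q.radius_le_of_ballLE hab).trans_lt ha, ?_⟩
  intro S hne hdir a ha haε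
  by_contra hempty
  have hs : ∀ c ∈ S, ε ≤ c.radius := fun c hc => not_lt.mp fun hcε => hempty ⟨c, hc, hcε⟩
  exact haε.not_ge (le_radius_of_isLUB hstd hne hdir ha hs)

end QuasiMetric

/-- in a standard quasi-metric space, the image of `X` under `x ↦ (x,0)`
is a Gδ subset of `B(X,d)`: each `U_n = {(x,r) : r < 1/2^n}` is Scott-open and the image
equals `⋂ n, U_n`. -/
theorem range_zero_ball_Gdelta {X : Type*} (q : QuasiMetric X) (hstd : Standard q) :
    letI := ballOrder q
    (∀ n : ℕ, ScottOpen {b : FormalBall X | b.radius < (1 / 2) ^ n}) ∧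
      Set.range (fun x : X => FormalBall.mk x 0) =
        ⋂ n : ℕ, {b : FormalBall X | b.radius < (1 / 2) ^ n} := by
  exact ⟨fun n => q.scottOpen_radius_lt hstd _,
    FormalBall.range_mk_zero.trans FormalBall.iInter_radius_lt_half_pow.symm⟩
end

section
/- Let X,d be a standard quasi-metric space. If (x, r+a) ≪ (y, s+a) in the poset of formal balls B(X,d) for some a ∈ ℝ≥0, then (x,r) ≪ (y,s). -/
open scoped ENNReal NNReal Classical

/-- The way-below relation: `a ≪ b` iff every nonempty directed set whose supremum lies
above `b` contains an element above `a`. -/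
def WayBelow {α : Type*} [Preorder α] (a b : α) : Prop :=
  ∀ S : Set α, S.Nonempty → DirectedOn (· ≤ ·) S → ∀ u, IsLUB S u → b ≤ u → ∃ c ∈ S, a ≤ c

section Aux
variable {X : Type*} (q : QuasiMetric X)

/-- The radius-shift map. -/
private def shiftMap (a : ℝ≥0) (c : FormalBall X) : FormalBall X :=
  ⟨c.center, c.radius + a⟩

private lemma shift_le_shift_iff (a : ℝ≥0) (b c : FormalBall X) :
    ballLE q (shiftMap a b) (shiftMap a c) ↔ ballLE q b c := by
  unfold ballLE shiftMap
  simp only [add_tsub_add_eq_tsub_right, add_le_add_iff_right]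

end Aux

/-- in a standard quasi-metric space, if `(x,r+a) ≪ (y,s+a)` in `B(X,d)`
then `(x,r) ≪ (y,s)`. -/
theorem wayBelow_of_wayBelow_shift {X : Type*} (q : QuasiMetric X) (hstd : Standard q)
    (x y : X) (r s a : ℝ≥0)
    (h : letI := ballOrder q;
      WayBelow (⟨x, r + a⟩ : FormalBall X) ⟨y, s + a⟩) :
    letI := ballOrder q
    WayBelow (⟨x, r⟩ : FormalBall X) ⟨y, s⟩ := by
  letI := ballOrder q
  intro S hne hdir u hu hyu
  set f : FormalBall X → FormalBall X := shiftMap a with hf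
  have hfmono : ∀ b c : FormalBall X, b ≤ c ↔ f b ≤ f c := by
    intro b c; exact (shift_le_shift_iff q a b c).symm
  set S' : Set (FormalBall X) := f '' S with hS'
  have hne' : S'.Nonempty := hne.image f
  have hdir' : DirectedOn (· ≤ ·) S' := by
    rintro _ ⟨b, hb, rfl⟩ _ ⟨c, hc, rfl⟩
    obtain ⟨e, he, hbe, hce⟩ := hdir b hb c hc
    exact ⟨f e, ⟨e, he, rfl⟩, (hfmono b e).1 hbe, (hfmono c e).1 hce⟩
  obtain ⟨u', hu'⟩ := (hstd S hne hdir a).1 ⟨u, hu⟩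
  -- f u is an upper bound of S'
  have hfu_ub : f u ∈ upperBounds S' := by
    rintro _ ⟨c, hc, rfl⟩
    exact (hfmono c u).1 (hu.1 hc)
  have hle1 : u' ≤ f u := hu'.2 hfu_ub
  have ha_le : a ≤ u'.radius := by
    have := hle1.1
    simp only [hf, shiftMap] at this
    exact le_trans (le_add_self) this
  -- the unshifted ball u'' is an upper bound of S
  set u'' : FormalBall X := ⟨u'.center, u'.radius - a⟩ with hu''def
  have hfu'' : f u'' = u' := by
    simp only [hf, shiftMap, hu''def, tsub_add_cancel_of_le ha_le]
  have hu''_ub : u'' ∈ upperBounds S := by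
    intro c hc
    have hfc : f c ≤ u' := hu'.1 ⟨c, hc, rfl⟩
    rw [← hfu''] at hfc
    exact (hfmono c u'').2 hfc
  have huu'' : u ≤ u'' := hu.2 hu''_ub
  have hyu' : (⟨y, s + a⟩ : FormalBall X) ≤ u' := by
    have h1 : f ⟨y, s⟩ ≤ f u := (hfmono _ _).1 hyu
    have h2 : f u ≤ f u'' := (hfmono _ _).1 huu''
    have : f ⟨y, s⟩ = (⟨y, s + a⟩ : FormalBall X) := rfl
    rw [← this, ← hfu'']
    exact le_trans h1 h2
  obtain ⟨c', hc', hxc'⟩ := h S' hne' hdir' u' hu' hyu'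
  obtain ⟨c, hc, rfl⟩ := hc'
  refine ⟨c, hc, ?_⟩
  have : f ⟨x, r⟩ = (⟨x, r + a⟩ : FormalBall X) := rfl
  exact (hfmono ⟨x, r⟩ c).2 (by rw [this]; exact hxc')
end

section
/- Let X,d be a standard quasi-metric space whose poset of formal balls B(X,d) is a continuous poset. Then the way-below relation on B(X,d) is standard: for every a ∈ ℝ≥0, (x,r) ≪ (y,s) if and only if (x,r+a) ≪ (y,s+a). -/
open scoped ENNReal NNReal Classical

/-- Continuous poset: every element is the supremum of a directed set of elements
way-below it. -/
def ContinuousPoset (α : Type*) [Preorder α] : Prop :=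
  ∀ a : α, ∃ S : Set α, S.Nonempty ∧ DirectedOn (· ≤ ·) S ∧ (∀ b ∈ S, WayBelow b a) ∧ IsLUB S a


section Aux

open FormalBall

variable {X : Type*} (q : QuasiMetric X)

/-- The radius-shift map on formal balls. -/
def bshift (a : ℝ≥0) : FormalBall X → FormalBall X :=
  fun c => FormalBall.mk c.center (c.radius + a)

lemma ballLE_shift_iff {a : ℝ≥0} {b c : FormalBall X} :
    ballLE q (bshift a b) (bshift a c) ↔ ballLE q b c := by
  unfold ballLE bshift
  simp only [add_tsub_add_eq_tsub_right]
  exact and_congr_left' (add_le_add_iff_right a)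

lemma ballLE_unshift {a : ℝ≥0} {b c : FormalBall X} (_hb : a ≤ b.radius) (hc : a ≤ c.radius)
    (h : ballLE q b c) :
    ballLE q (FormalBall.mk b.center (b.radius - a)) (FormalBall.mk c.center (c.radius - a)) := by
  refine ⟨tsub_le_tsub_right h.1 a, ?_⟩
  rw [tsub_tsub_tsub_cancel_right hc]
  exact h.2

/-- In a standard quasi-metric space, radius shifts preserve suprema of
nonempty directed families. -/
lemma isLUB_shift (hstd : Standard q) {S : Set (FormalBall X)} (hne : S.Nonempty)
    (hdir : letI := ballOrder q; DirectedOn (· ≤ ·) S) {u : FormalBall X}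
    (hu : letI := ballOrder q; IsLUB S u) (a : ℝ≥0) :
    letI := ballOrder q; IsLUB (bshift a '' S) (bshift a u) := by
  letI := ballOrder q
  obtain ⟨b', hb'⟩ := (hstd S hne hdir a).mp ⟨u, hu⟩
  have himg : (fun c : FormalBall X => FormalBall.mk c.center (c.radius + a)) '' S
      = bshift a '' S := rfl
  rw [himg] at hb'
  -- `bshift a u` is an upper bound of the image
  have hub : bshift a u ∈ upperBounds (bshift a '' S) := by
    rintro v ⟨c, hcS, rfl⟩
    exact (ballLE_shift_iff q).mpr (hu.1 hcS)
  have h1 : b' ≤ bshift a u := hb'.2 hub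
  have ha : a ≤ b'.radius := le_trans (le_add_self) h1.1
  -- the unshift of `b'` is an upper bound of `S`
  have hub2 : FormalBall.mk b'.center (b'.radius - a) ∈ upperBounds S := by
    intro c hcS
    have h2 : ballLE q (bshift a c) b' := hb'.1 ⟨c, hcS, rfl⟩
    have h3 := ballLE_unshift q (le_add_self : a ≤ (bshift a c).radius) ha h2
    dsimp only [bshift] at h3
    rw [add_tsub_cancel_right] at h3
    exact h3
  have h5 : u ≤ FormalBall.mk b'.center (b'.radius - a) := hu.2 hub2
  have h6 : bshift a u ≤ b' := by
    have := (ballLE_shift_iff q (a := a)).mpr h5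
    have hcanc : (b'.radius - a) + a = b'.radius := tsub_add_cancel_of_le ha
    have hb'eq : bshift a (FormalBall.mk b'.center (b'.radius - a)) = b' := by
      simp [bshift, hcanc]
    rwa [hb'eq] at this
  have : b' = bshift a u := le_antisymm h1 h6
  rwa [this] at hb'

end Aux

/-- in a standard quasi-metric space whose poset of formal balls is
continuous, the way-below relation is standard: `(x,r) ≪ (y,s)` iff
`(x,r+a) ≪ (y,s+a)` for every `a ≥ 0`. -/
theorem wayBelow_standard_of_continuous {X : Type*} (q : QuasiMetric X)
    (hstd : Standard q)
    (hcont : letI := ballOrder q; ContinuousPoset (FormalBall X)) :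
    letI := ballOrder q
    ∀ (a : ℝ≥0) (x y : X) (r s : ℝ≥0),
      WayBelow (⟨x, r⟩ : FormalBall X) ⟨y, s⟩ ↔
        WayBelow (⟨x, r + a⟩ : FormalBall X) ⟨y, s + a⟩ := by
  letI := ballOrder q
  intro a x y r s
  constructor
  · -- from `(x,r) ≪ (y,s)` to `(x,r+a) ≪ (y,s+a)`
    intro h
    -- get a directed family of elements way below `(y, s+a)` with supremum `(y, s+a)`
    obtain ⟨F, hFne, hFdir, hFwb, hFlub⟩ := hcont ⟨y, s + a⟩
    -- every element of F has radius at least `a`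
    have hrad : ∀ f ∈ F, a ≤ f.radius := by
      intro f hf
      have : (⟨y, s + a⟩ : FormalBall X).radius ≤ f.radius := (hFlub.1 hf).1
      exact le_trans le_add_self this
    -- the unshifted family
    set unsh : FormalBall X → FormalBall X :=
      fun f => FormalBall.mk f.center (f.radius - a) with hunsh
    set F₀ : Set (FormalBall X) := unsh '' F with hF₀
    have hF₀ne : F₀.Nonempty := hFne.image _
    have hF₀dir : DirectedOn (· ≤ ·) F₀ := by
      rintro _ ⟨f, hf, rfl⟩ _ ⟨f', hf', rfl⟩
      obtain ⟨g, hg, hfg, hf'g⟩ := hFdir f hf f' hf'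
      exact ⟨unsh g, ⟨g, hg, rfl⟩,
        ballLE_unshift q (hrad f hf) (hrad g hg) hfg,
        ballLE_unshift q (hrad f' hf') (hrad g hg) hf'g⟩
    -- shifting back gives `F`
    have himg : bshift a '' F₀ = F := by
      rw [hF₀, Set.image_image]
      have : ∀ f ∈ F, bshift a (unsh f) = f := by
        intro f hf
        simp [bshift, hunsh, tsub_add_cancel_of_le (hrad f hf)]
      calc (fun f => bshift a (unsh f)) '' F = id '' F := Set.image_congr this
        _ = F := Set.image_id F
    -- `F₀` has a supremum, which must be `(y, s)`
    obtain ⟨b₀, hb₀⟩ := (hstd F₀ hF₀ne hF₀dir a).mpr ⟨⟨y, s + a⟩, by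
      have : (fun c : FormalBall X => FormalBall.mk c.center (c.radius + a)) '' F₀
          = bshift a '' F₀ := rfl
      rw [this, himg]; exact hFlub⟩
    have hbF : IsLUB F (bshift a b₀) := by
      have := isLUB_shift q hstd hF₀ne hF₀dir hb₀ a
      rwa [himg] at this
    have hbeq : bshift a b₀ = ⟨y, s + a⟩ := hbF.unique hFlub
    have hb₀eq : b₀ = ⟨y, s⟩ := by
      obtain ⟨z, t⟩ := b₀
      have h1 : z = y := congrArg FormalBall.center hbeq
      have h2 : t + a = s + a := congrArg FormalBall.radius hbeq
      have h3 : t = s := add_right_cancel h2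
      rw [h1, h3]
    rw [hb₀eq] at hb₀
    -- apply `(x,r) ≪ (y,s)` to `F₀`
    obtain ⟨c₀, hc₀, hxc₀⟩ := h F₀ hF₀ne hF₀dir ⟨y, s⟩ hb₀ le_rfl
    obtain ⟨f, hf, rfl⟩ := hc₀
    -- shift back up: `(x, r+a) ≤ f` and `f ≪ (y, s+a)`
    have hxf : (⟨x, r + a⟩ : FormalBall X) ≤ f := by
      have h1 : bshift a (⟨x, r⟩ : FormalBall X) ≤ bshift a (unsh f) :=
        (ballLE_shift_iff q).mpr hxc₀
      have h2 : bshift a (unsh f) = f := by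
        simp [bshift, hunsh, tsub_add_cancel_of_le (hrad f hf)]
      rw [h2] at h1
      exact h1
    intro S hSne hSdir u hu hyu
    obtain ⟨c, hcS, hfc⟩ := hFwb f hf S hSne hSdir u hu hyu
    exact ⟨c, hcS, le_trans hxf hfc⟩
  · -- from `(x,r+a) ≪ (y,s+a)` to `(x,r) ≪ (y,s)`
    intro h S hSne hSdir u hu hyu
    have hlub' : IsLUB (bshift a '' S) (bshift a u) := isLUB_shift q hstd hSne hSdir hu a
    have hyu' : (⟨y, s + a⟩ : FormalBall X) ≤ bshift a u := (ballLE_shift_iff q).mpr hyu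
    obtain ⟨c', hc', hxc'⟩ := h (bshift a '' S) (hSne.image _)
      (by
        rintro _ ⟨c, hc, rfl⟩ _ ⟨c'', hc'', rfl⟩
        obtain ⟨g, hg, h1, h2⟩ := hSdir c hc c'' hc''
        exact ⟨bshift a g, ⟨g, hg, rfl⟩, (ballLE_shift_iff q).mpr h1,
          (ballLE_shift_iff q).mpr h2⟩)
      (bshift a u) hlub' hyu'
    obtain ⟨c, hcS, rfl⟩ := hc'
    exact ⟨c, hcS, (ballLE_shift_iff q).mp hxc'⟩
end

section
/- Let X,d be a standard quasi-metric space and x ∈ X. If for every ε > 0 the d⁺-open ball B((x,0), <ε) = {(y,s) : d(x,y) + s < ε} is Scott-open in B(X,d), then x is d-finite: for every directed family of formal balls (y_i, s_i) with supremum of the form (y,0), d(x,y) = inf_i (d(x,y_i) + s_i). -/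
open scoped ENNReal NNReal Classical

/-! The function `(y, s) ↦ d(x, y) + s` is antitone on formal balls, which bounds `d(x, y)` above
by the infimum. Conversely, if `d(x, y) < ε` then `(y, 0)` lies in the Scott-open ball of radius `ε`
around `(x, 0)`, so some member of the directed family already does, pushing the infimum below `ε`. -/

theorem QuasiMetric.dist_add_radius_le_of_ballLE {X : Type*} (q : QuasiMetric X) (x : X)
    {b c : FormalBall X} (hbc : ballLE q b c) :
    q.d x c.center + c.radius ≤ q.d x b.center + b.radius :=
  calc q.d x c.center + c.radius
      ≤ q.d x b.center + q.d b.center c.center + c.radius := by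
        gcongr; exact q.triangle _ _ _
    _ ≤ q.d x b.center + ↑(b.radius - c.radius) + c.radius := by gcongr; exact hbc.2
    _ = q.d x b.center + b.radius := by
        rw [add_assoc, ← ENNReal.coe_add, tsub_add_cancel_of_le hbc.1]

theorem iInf_le_of_scottOpen_sublevel {α : Type*} [Preorder α] (f : α → ℝ≥0∞)
    (hf : ∀ ε : ℝ≥0, 0 < ε → ScottOpen {a | f a < ε}) {S : Set α} (hS : S.Nonempty)
    (hdir : DirectedOn (· ≤ ·) S) {a : α} (ha : IsLUB S a) :
    ⨅ b ∈ S, f b ≤ f a := by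
  refine le_of_forall_gt fun c hac => ?_
  obtain ⟨ε, hε, hεc⟩ := ENNReal.lt_iff_exists_nnreal_btwn.1 hac
  have hε_pos : 0 < ε := ENNReal.coe_pos.1 (pos_of_gt hε)
  obtain ⟨b, hbS, hb⟩ := (hf ε hε_pos).2 S hS hdir a ha hε
  exact (iInf₂_le b hbS).trans_lt (hb.trans hεc)

theorem dFinite_of_center_general {X : Type*} (q : QuasiMetric X) (x : X)
    (hcenter : ∀ ε : ℝ≥0, 0 < ε →
      (letI := ballOrder q;
        ScottOpen {b : FormalBall X | q.d x b.center + (b.radius : ℝ≥0∞) < (ε : ℝ≥0∞)})) :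
    ∀ S : Set (FormalBall X), S.Nonempty →
      (letI := ballOrder q; DirectedOn (· ≤ ·) S) →
      ∀ y : X, (letI := ballOrder q; IsLUB S ⟨y, 0⟩) →
        q.d x y = ⨅ b ∈ S, (q.d x b.center + (b.radius : ℝ≥0∞)) := by
  let _ := ballOrder q
  intro S hS hdir y hlub
  apply le_antisymm
  · refine le_iInf₂ fun b hb => ?_
    simpa using q.dist_add_radius_le_of_ballLE x (hlub.1 hb)
  · simpa using iInf_le_of_scottOpen_sublevel _ hcenter hS hdir hlub

/-- in a standard quasi-metric space, if every `d⁺`-open ball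
`B((x,0),<ε) = {(y,s) : d(x,y) + s < ε}` is Scott-open (i.e. `x` is a center point),
then `x` is `d`-finite: for every directed family of formal balls with supremum `(y,0)`,
`d(x,y) = inf_i (d(x,y_i) + s_i)`. -/
theorem dFinite_of_center {X : Type*} (q : QuasiMetric X) (hstd : Standard q) (x : X)
    (hcenter : ∀ ε : ℝ≥0, 0 < ε →
      (letI := ballOrder q;
        ScottOpen {b : FormalBall X | q.d x b.center + (b.radius : ℝ≥0∞) < (ε : ℝ≥0∞)})) :
    ∀ S : Set (FormalBall X), S.Nonempty →
      (letI := ballOrder q; DirectedOn (· ≤ ·) S) →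
      ∀ y : X, (letI := ballOrder q; IsLUB S ⟨y, 0⟩) →
        q.d x y = ⨅ b ∈ S, (q.d x b.center + (b.radius : ℝ≥0∞)) :=
  dFinite_of_center_general q x hcenter
end

section
/- On the poset of formal balls B(X,d) of a quasi-metric space, the open ball topology of the quasi-metric d⁺((x,r),(y,s)) = max(d(x,y) - r + s, 0) is finer than the Scott topology of the order (x,r) ≤ (y,s) iff d(x,y) ≤ r - s. -/
open scoped ENNReal NNReal Classical

/-! The ball `(x, r)` is the supremum of the directed family of larger concentric balls
`(x, r + t)`, `t > 0`; Scott-openness then forces one of them, hence a `d⁺`-ball of radius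
`t` around `(x, r)`, into any Scott-open set containing `(x, r)`. -/

namespace FormalBall

variable {X : Type*}

def enlarge (b : FormalBall X) (t : ℝ≥0) : FormalBall X := ⟨b.center, b.radius + t⟩

theorem ballLE_iff_add_le (q : QuasiMetric X) (b c : FormalBall X) :
    ballLE q b c ↔ q.d b.center c.center + c.radius ≤ b.radius := by
  refine ⟨fun ⟨hr, hd⟩ => ?_, fun h => ?_⟩
  · calc q.d b.center c.center + c.radius ≤ ↑(b.radius - c.radius) + c.radius := by gcongr
      _ = b.radius := by rw [← ENNReal.coe_add, tsub_add_cancel_of_le hr]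
  · have hr : c.radius ≤ b.radius := by exact_mod_cast le_add_self.trans h
    refine ⟨hr, ?_⟩
    rw [ENNReal.coe_sub]
    exact ENNReal.le_sub_of_add_le_right ENNReal.coe_ne_top h

theorem enlarge_le_iff (q : QuasiMetric X) (b c : FormalBall X) (t : ℝ≥0) :
    ballLE q (b.enlarge t) c ↔ q.d b.center c.center + c.radius ≤ b.radius + t := by
  simp [ballLE_iff_add_le, enlarge]

theorem directedOn_enlarge (q : QuasiMetric X) (b : FormalBall X) :
    letI := ballOrder q
    DirectedOn (· ≤ ·) (b.enlarge '' Set.Ioi 0) := by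
  rintro _ ⟨t₁, ht₁, rfl⟩ _ ⟨t₂, ht₂, rfl⟩
  refine ⟨b.enlarge (min t₁ t₂), ⟨min t₁ t₂, Set.mem_Ioi.2 (lt_min ht₁ ht₂), rfl⟩, ?_, ?_⟩ <;>
    refine (enlarge_le_iff q _ _ _).2 ?_ <;>
    simp [enlarge, q.refl]

theorem isLUB_enlarge (q : QuasiMetric X) (b : FormalBall X) :
    letI := ballOrder q
    IsLUB (b.enlarge '' Set.Ioi 0) b := by
  let := ballOrder q
  refine ⟨?_, fun c hc => ?_⟩
  · rintro _ ⟨t, -, rfl⟩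
    show ballLE q _ _
    simp [enlarge_le_iff, q.refl]
  · refine (ballLE_iff_add_le q b c).2 <| ENNReal.le_of_forall_pos_le_add fun t ht _ => ?_
    exact (enlarge_le_iff q b c t).1 (hc ⟨t, ht, rfl⟩)

end FormalBall

/-- on `B(X,d)`, the open ball topology of the quasi-metric
`d⁺((x,r),(y,s)) = max (d(x,y) - r + s) 0` is finer than the Scott topology: every
Scott-open set contains, around each of its points `(x,r)`, a `d⁺`-open ball
`{(y,s) : d(x,y) + s < r + ε}`. -/
theorem openBall_finer_than_scott {X : Type*} (q : QuasiMetric X) :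
    letI := ballOrder q
    ∀ U : Set (FormalBall X), ScottOpen U → ∀ b ∈ U, ∃ ε : ℝ≥0, 0 < ε ∧
      {c : FormalBall X |
        q.d b.center c.center + (c.radius : ℝ≥0∞) < (b.radius : ℝ≥0∞) + (ε : ℝ≥0∞)} ⊆ U := by
  intro U hU b hb
  obtain ⟨_, ⟨t, ht, rfl⟩, hmem⟩ :=
    hU.2 _ (Set.nonempty_Ioi.image _) (FormalBall.directedOn_enlarge q b) b
      (FormalBall.isLUB_enlarge q b) hb
  exact ⟨t, ht, fun c hc => hU.1 _ hmem c ((FormalBall.enlarge_le_iff q b c t).2 hc.le)⟩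
end

section
/- Let X,d be a standard quasi-metric space, U a d-Scott open subset of X, and define d(x, U^c) = sup{r ∈ ℝ≥0 : (x,r) ∈ Û}, where Û is the largest Scott-open subset of B(X,d) whose intersection with X is contained in U. Then d(x, U^c) ≤ d(x,y) + d(y, U^c) for all x, y ∈ X, and d(x, U^c) = 0 iff x ∉ U. -/
open scoped ENNReal NNReal Classical

theorem scottOpen_iff {α : Type*} [Preorder α] {U : Set α} :
    ScottOpen U ↔ IsUpperSet U ∧ DirSupInacc U :=
  ⟨fun h => ⟨fun _ _ hab ha => h.1 _ ha _ hab, fun _ hd hdir _ ha haU => h.2 _ hd hdir _ ha haU⟩,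
    fun h => ⟨fun _ ha _ hab => h.1 hab ha, fun _ hd hdir _ ha haU => h.2 hd hdir ha haU⟩⟩

theorem ScottOpen.sUnion {α : Type*} [Preorder α] {S : Set (Set α)}
    (hS : ∀ V ∈ S, ScottOpen V) : ScottOpen (⋃₀ S) :=
  scottOpen_iff.2 ⟨isUpperSet_sUnion fun V hV => (scottOpen_iff.1 (hS V hV)).1,
    DirSupInacc.sUnion fun V hV => (scottOpen_iff.1 (hS V hV)).2⟩

namespace FormalBall

variable {X : Type*} (q : QuasiMetric X)

theorem ballLE_of_radius_le {x : X} {r s : ℝ≥0} (h : s ≤ r) : ballLE q ⟨x, r⟩ ⟨x, s⟩ :=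
  ⟨h, by simp [q.refl]⟩

theorem ballLE_of_dist_eq {x y : X} {r δ : ℝ≥0} (hδ : q.d x y = δ) (hr : δ ≤ r) :
    ballLE q ⟨x, r⟩ ⟨y, r - δ⟩ :=
  ⟨tsub_le_self, by simp [tsub_tsub_cancel_of_le hr, hδ]⟩

theorem directedOn_mk_image_Ioi (x : X) :
    letI := ballOrder q
    DirectedOn (· ≤ ·) (FormalBall.mk x '' Set.Ioi 0) := by
  rintro _ ⟨r, hr, rfl⟩ _ ⟨s, hs, rfl⟩
  exact ⟨⟨x, min r s⟩, ⟨min r s, (lt_min hr hs : 0 < min r s), rfl⟩,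
    ballLE_of_radius_le q (min_le_left r s), ballLE_of_radius_le q (min_le_right r s)⟩

theorem isLUB_mk_image_Ioi (x : X) :
    letI := ballOrder q
    IsLUB (FormalBall.mk x '' Set.Ioi 0) ⟨x, 0⟩ := by
  refine ⟨?_, ?_⟩
  · rintro _ ⟨r, -, rfl⟩
    exact ballLE_of_radius_le q zero_le
  rintro ⟨y, t⟩ hub
  obtain rfl : t = 0 := nonpos_iff_eq_zero.1 <|
    le_of_forall_gt_imp_ge_of_dense fun r hr => (hub ⟨r, hr, rfl⟩).1
  have hd : q.d x y = 0 := nonpos_iff_eq_zero.1 <|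
    ENNReal.le_of_forall_pos_le_add fun ε hε _ => by simpa using (hub ⟨ε, hε, rfl⟩).2
  exact ⟨le_rfl, by simp [hd]⟩

/-- For `V = Û` this is `d(x, U^c)`. -/
noncomputable def radiusSup (V : Set (FormalBall X)) (x : X) : ℝ≥0∞ :=
  ⨆ r ∈ {r : ℝ≥0 | (⟨x, r⟩ : FormalBall X) ∈ V}, (r : ℝ≥0∞)

variable {q} {V : Set (FormalBall X)}

theorem radius_le_radiusSup {x : X} {r : ℝ≥0} (hr : (⟨x, r⟩ : FormalBall X) ∈ V) :
    (r : ℝ≥0∞) ≤ radiusSup V x :=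
  le_biSup (fun r : ℝ≥0 => (r : ℝ≥0∞)) hr

theorem radius_le_dist_add_radiusSup (hV : letI := ballOrder q; IsUpperSet V) {x : X}
    {r : ℝ≥0} (hr : (⟨x, r⟩ : FormalBall X) ∈ V) (y : X) :
    (r : ℝ≥0∞) ≤ q.d x y + radiusSup V y := by
  have hshift : (r : ℝ≥0∞) - q.d x y ≤ radiusSup V y := by
    rcases le_or_gt (r : ℝ≥0∞) (q.d x y) with hrd | hdr
    · simp [tsub_eq_zero_of_le hrd]
    generalize hd : q.d x y = d at hdr ⊢
    lift d to ℝ≥0 using (hdr.trans ENNReal.coe_lt_top).ne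
    rw [← ENNReal.coe_sub]
    exact radius_le_radiusSup (hV (ballLE_of_dist_eq q hd (ENNReal.coe_lt_coe.1 hdr).le) hr)
  calc (r : ℝ≥0∞) ≤ q.d x y + (r - q.d x y) := le_add_tsub
    _ ≤ q.d x y + radiusSup V y := add_le_add_right hshift _

theorem radiusSup_le_dist_add (hV : letI := ballOrder q; IsUpperSet V) (x y : X) :
    radiusSup V x ≤ q.d x y + radiusSup V y :=
  iSup₂_le fun _ hr => radius_le_dist_add_radiusSup hV hr y

theorem radiusSup_eq_zero_iff (hV : letI := ballOrder q; ScottOpen V) (x : X) :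
    radiusSup V x = 0 ↔ (⟨x, 0⟩ : FormalBall X) ∉ V := by
  constructor
  · intro h0 hx
    obtain ⟨_, ⟨r, hr, rfl⟩, hrV⟩ := hV.2 _ (Set.image_nonempty.2 Set.nonempty_Ioi)
      (directedOn_mk_image_Ioi q x) _ (isLUB_mk_image_Ioi q x) hx
    exact (ENNReal.coe_pos.2 hr).not_ge (h0 ▸ radius_le_radiusSup hrV)
  · intro hx
    exact nonpos_iff_eq_zero.1 <|
      iSup₂_le fun r hr => absurd (hV.1 _ hr _ (ballLE_of_radius_le q zero_le)) hx

end FormalBall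

theorem dist_to_complement_general {X : Type*} (q : QuasiMetric X)
    (U : Set X)
    (hU : letI := ballOrder q;
      ∃ V : Set (FormalBall X), ScottOpen V ∧
        U = {x : X | (⟨x, 0⟩ : FormalBall X) ∈ V}) :
    letI := ballOrder q
    let hatU : Set (FormalBall X) :=
      ⋃₀ {V : Set (FormalBall X) | ScottOpen V ∧
        {x : X | (⟨x, 0⟩ : FormalBall X) ∈ V} ⊆ U}
    let D : X → ℝ≥0∞ := fun x =>
      ⨆ r ∈ {r : ℝ≥0 | (⟨x, r⟩ : FormalBall X) ∈ hatU}, (r : ℝ≥0∞)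
    (∀ x y : X, D x ≤ q.d x y + D y) ∧ (∀ x : X, D x = 0 ↔ x ∉ U) := by
  let := ballOrder q
  intro hatU D
  have hatU_open : ScottOpen hatU := ScottOpen.sUnion fun _ => And.left
  have mem_hatU : ∀ x : X, (⟨x, 0⟩ : FormalBall X) ∈ hatU ↔ x ∈ U := by
    obtain ⟨V, hV, rfl⟩ := hU
    exact fun x => ⟨fun ⟨_, hW, hxW⟩ => hW.2 hxW, fun hx => ⟨V, ⟨hV, le_rfl⟩, hx⟩⟩
  refine ⟨FormalBall.radiusSup_le_dist_add (scottOpen_iff.1 hatU_open).1, fun x => ?_⟩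
  rw [← mem_hatU]
  exact FormalBall.radiusSup_eq_zero_iff hatU_open x

/-- in a standard quasi-metric space, for a `d`-Scott open `U ⊆ X`, with
`Û` the largest Scott-open subset of `B(X,d)` meeting `X` inside `U`, and
`d(x,U^c) = sup {r : (x,r) ∈ Û}`, we have the triangle inequality
`d(x,U^c) ≤ d(x,y) + d(y,U^c)` and `d(x,U^c) = 0 ↔ x ∉ U`. -/
theorem dist_to_complement {X : Type*} (q : QuasiMetric X) (hstd : Standard q)
    (U : Set X)
    (hU : letI := ballOrder q;
      ∃ V : Set (FormalBall X), ScottOpen V ∧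
        U = {x : X | (⟨x, 0⟩ : FormalBall X) ∈ V}) :
    letI := ballOrder q
    let hatU : Set (FormalBall X) :=
      ⋃₀ {V : Set (FormalBall X) | ScottOpen V ∧
        {x : X | (⟨x, 0⟩ : FormalBall X) ∈ V} ⊆ U}
    let D : X → ℝ≥0∞ := fun x =>
      ⨆ r ∈ {r : ℝ≥0 | (⟨x, r⟩ : FormalBall X) ∈ hatU}, (r : ℝ≥0∞)
    (∀ x y : X, D x ≤ q.d x y + D y) ∧ (∀ x : X, D x = 0 ↔ x ∉ U) :=
  dist_to_complement_general q U hU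
end
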